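/- arXiv:1108.3679 — 3 statements merged into one kernel-verified Lean document; each statement's English description precedes it below -/
import Mathlib

section
/- For every natural number n ≥ 1 and θ in (0, π), ∫_θ^{π/2} dx/sin^{2n+1}(x) = ((2n-1)!!/(2n)!!) [ log(cot(θ/2)) + cos(θ) Σ_{k=1}^{n} ((2k-2)!!/(2k-1)!!) · 1/sin^{2k}(θ) ]. -/
/-!
Differentiating `cos x / sin x ^ (j + 1)` gives the reduction formula
`(j + 1) ∫ dx / sin x ^ (j + 2) = j ∫ dx / sin x ^ j + [-cos x / sin x ^ (j + 1)]`, whose boundary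
term at `π / 2` vanishes. Starting from `∫_θ^{π/2} dx / sin x = log cot (θ / 2)` (antiderivative
`log tan (x / 2)`), induction on `n` with `j = 2n + 1` gives the closed form: the factors
`(2n + 1) / (2n + 2)` accumulate into `(2n - 1)‼ / (2n)‼`, and each boundary term at `θ` adds one
summand.
-/

open Real Nat

lemma sin_pos_of_mem_uIcc {a b x : ℝ} (ha : a ∈ Set.Ioo 0 π) (hb : b ∈ Set.Ioo 0 π)
    (hx : x ∈ Set.uIcc a b) : 0 < sin x :=
  sin_pos_of_mem_Ioo (Set.ordConnected_Ioo.uIcc_subset ha hb hx)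

lemma intervalIntegrable_one_div_sin_pow {a b : ℝ} (ha : a ∈ Set.Ioo 0 π)
    (hb : b ∈ Set.Ioo 0 π) (m : ℕ) :
    IntervalIntegrable (fun x => 1 / sin x ^ m) MeasureTheory.volume a b :=
  (continuousOn_const.div (continuous_sin.continuousOn.pow m) fun _ hx =>
    (pow_pos (sin_pos_of_mem_uIcc ha hb hx) m).ne').intervalIntegrable

lemma hasDerivAt_cos_div_sin_pow (j : ℕ) {x : ℝ} (hx : sin x ≠ 0) :
    HasDerivAt (fun y => cos y / sin y ^ (j + 1))
      (j * (1 / sin x ^ j) - (j + 1) * (1 / sin x ^ (j + 2))) x := by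
  have hpow : HasDerivAt (fun y => sin y ^ (j + 1)) ((j + 1 : ℕ) * sin x ^ j * cos x) x := by
    simpa using (hasDerivAt_sin x).fun_pow (j + 1)
  refine ((hasDerivAt_cos x).fun_div hpow (pow_ne_zero _ hx)).congr_deriv ?_
  have hcos_sq : cos x ^ 2 = 1 - sin x ^ 2 := by linarith [sin_sq_add_cos_sq x]
  have hsj : sin x ^ j ≠ 0 := pow_ne_zero _ hx
  rw [pow_succ, pow_add]
  generalize sin x ^ j = s at hsj ⊢
  field_simp
  push_cast
  linear_combination (-(j : ℝ) - 1) * hcos_sq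

lemma integral_one_div_sin_pow_add_two (j : ℕ) {a b : ℝ} (ha : a ∈ Set.Ioo 0 π)
    (hb : b ∈ Set.Ioo 0 π) :
    (j + 1) * ∫ x in a..b, 1 / sin x ^ (j + 2) =
      j * (∫ x in a..b, 1 / sin x ^ j) + (cos a / sin a ^ (j + 1) - cos b / sin b ^ (j + 1)) := by
  have hint := intervalIntegrable_one_div_sin_pow ha hb
  have hFTC := intervalIntegral.integral_eq_sub_of_hasDerivAt
    (fun x hx => hasDerivAt_cos_div_sin_pow j (sin_pos_of_mem_uIcc ha hb hx).ne')
    (((hint j).const_mul j).sub ((hint (j + 2)).const_mul (j + 1)))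
  rw [intervalIntegral.integral_sub ((hint j).const_mul j) ((hint (j + 2)).const_mul (j + 1)),
    intervalIntegral.integral_const_mul, intervalIntegral.integral_const_mul] at hFTC
  linarith

lemma hasDerivAt_log_tan_half {x : ℝ} (hx : x ∈ Set.Ioo 0 π) :
    HasDerivAt (fun y => log (tan (y / 2))) (1 / sin x) x := by
  have hcos : 0 < cos (x / 2) :=
    cos_pos_of_mem_Ioo ⟨by linarith [hx.1, pi_pos], by linarith [hx.2]⟩
  have hsin : 0 < sin (x / 2) :=
    sin_pos_of_mem_Ioo ⟨by linarith [hx.1], by linarith [hx.2, pi_pos]⟩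
  have htan : HasDerivAt (fun y => tan (y / 2)) (1 / cos (x / 2) ^ 2 * (1 / 2)) x :=
    (hasDerivAt_tan hcos.ne').comp (h₂ := tan) x ((hasDerivAt_id' x).div_const 2)
  have htan_pos : 0 < tan (x / 2) := by rw [tan_eq_sin_div_cos]; positivity
  refine (htan.log htan_pos.ne').congr_deriv ?_
  rw [tan_eq_sin_div_cos]
  have hsin_double : sin x = 2 * sin (x / 2) * cos (x / 2) := by rw [← sin_two_mul]; ring_nf
  rw [hsin_double]
  field_simp

lemma integral_one_div_sin {a b : ℝ} (ha : a ∈ Set.Ioo 0 π) (hb : b ∈ Set.Ioo 0 π) :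
    ∫ x in a..b, 1 / sin x = log (tan (b / 2)) - log (tan (a / 2)) := by
  refine intervalIntegral.integral_eq_sub_of_hasDerivAt
    (fun x hx => hasDerivAt_log_tan_half (Set.ordConnected_Ioo.uIcc_subset ha hb hx)) ?_
  simpa using intervalIntegrable_one_div_sin_pow ha hb 1

lemma integral_one_div_sin_to_pi_div_two {θ : ℝ} (hθ : θ ∈ Set.Ioo 0 π) :
    ∫ x in θ..(π / 2), 1 / sin x = log (cot (θ / 2)) := by
  rw [integral_one_div_sin hθ ⟨by positivity, by linarith [pi_pos]⟩,
    show π / 2 / 2 = π / 4 by ring, tan_pi_div_four, log_one, zero_sub, cot_eq_cos_div_sin,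
    tan_eq_sin_div_cos, ← log_inv, inv_div]

theorem integral_one_div_sin_odd_pow_general (n : ℕ) (θ : ℝ) (hθ : θ ∈ Set.Ioo 0 π) :
    ∫ x in θ..(π / 2), 1 / Real.sin x ^ (2 * n + 1) =
      (((2 * n - 1)‼ : ℝ) / ((2 * n)‼ : ℝ)) *
        (Real.log (Real.cot (θ / 2)) +
          Real.cos θ * ∑ k ∈ Finset.Icc 1 n,
            (((2 * k - 2)‼ : ℝ) / ((2 * k - 1)‼ : ℝ)) * (1 / Real.sin θ ^ (2 * k))) := by
  have hπ2 : π / 2 ∈ Set.Ioo 0 π := ⟨by positivity, by linarith [pi_pos]⟩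
  induction n with
  | zero =>
    -- `2 * 0 - 1 = 0` in `ℕ`, so the coefficient is `0‼ / 0‼ = 1`.
    simpa using integral_one_div_sin_to_pi_div_two hθ
  | succ n ih =>
    have hred := integral_one_div_sin_pow_add_two (2 * n + 1) hθ hπ2
    rw [cos_pi_div_two, zero_div, sub_zero, ih] at hred
    have hodd : ((2 * n + 1)‼ : ℝ) = (2 * n + 1) * (2 * n - 1)‼ := by
      rw [doubleFactorial_add_one]
      push_cast
      ring
    have heven : ((2 * n + 2)‼ : ℝ) = (2 * n + 2) * (2 * n)‼ := by
      rw [doubleFactorial_add_two]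
      push_cast
      ring
    have hsin : sin θ ≠ 0 := (sin_pos_of_mem_Ioo hθ).ne'
    have hodd_pos : ((2 * n - 1)‼ : ℝ) ≠ 0 := by positivity
    have heven_pos : ((2 * n)‼ : ℝ) ≠ 0 := by positivity
    rw [show 2 * (n + 1) + 1 = 2 * n + 1 + 2 by ring, Finset.sum_Icc_succ_top (by omega),
      show 2 * (n + 1) - 1 = 2 * n + 1 by omega, show 2 * (n + 1) - 2 = 2 * n by omega,
      show 2 * (n + 1) = 2 * n + 2 by ring, hodd, heven]
    push_cast at hred ⊢
    set I := ∫ x in θ..π / 2, 1 / sin x ^ (2 * n + 1 + 2)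
    set S := ∑ k ∈ Finset.Icc 1 n, ((2 * k - 2)‼ : ℝ) / (2 * k - 1)‼ * (1 / sin θ ^ (2 * k))
    set L := log (cot (θ / 2))
    field_simp at hred ⊢
    linear_combination hred

theorem integral_one_div_sin_odd_pow (n : ℕ) (hn : 1 ≤ n) (θ : ℝ) (hθ : θ ∈ Set.Ioo 0 π) :
    ∫ x in θ..(π / 2), 1 / Real.sin x ^ (2 * n + 1) =
      (((2 * n - 1)‼ : ℝ) / ((2 * n)‼ : ℝ)) *
        (Real.log (Real.cot (θ / 2)) +
          Real.cos θ * ∑ k ∈ Finset.Icc 1 n,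
            (((2 * k - 2)‼ : ℝ) / ((2 * k - 1)‼ : ℝ)) * (1 / Real.sin θ ^ (2 * k))) :=
  integral_one_div_sin_odd_pow_general n θ hθ
end

section
/- For every natural number n ≥ 1 and θ in (0, π), ∫_θ^{π/2} dx/sin^{2n}(x) = (n-1)! Σ_{k=1}^{n} cot^{2k-1}(θ) / ((2k-1)·(k-1)!·(n-k)!). -/
/-!
Since `cot' = -(1 + cot²)` and `1 + cot² = 1 / sin²`, the substitution `t = cot x` turns
`1 / sin^(2m+2) x dx` into `-(1 + t²)^m dt`. Expanding `(1 + t²)^m` binomially and integrating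
termwise gives `Σ_j (m choose j) cot^(2j+1) θ / (2j+1)`, the lower limit contributing nothing
because `cot (π/2) = 0`; writing out the binomial coefficients gives the stated sum.
-/

open Real Nat Finset

namespace Real

lemma one_add_cot_sq {x : ℝ} (hx : sin x ≠ 0) : 1 + cot x ^ 2 = 1 / sin x ^ 2 := by
  rw [cot_eq_cos_div_sin]
  field_simp
  linarith [sin_sq_add_cos_sq x]

lemma hasDerivAt_cot {x : ℝ} (hx : sin x ≠ 0) : HasDerivAt cot (-(1 + cot x ^ 2)) x := by
  have h := (hasDerivAt_cos x).div (hasDerivAt_sin x) hx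
  rw [show cos / sin = cot from funext fun y => (cot_eq_cos_div_sin y).symm] at h
  refine h.congr_deriv ?_
  rw [one_add_cot_sq hx]
  field_simp
  linarith [sin_sq_add_cos_sq x]

lemma cot_pi_div_two : cot (π / 2) = 0 := by
  rw [cot_eq_cos_div_sin, cos_pi_div_two, zero_div]

end Real

noncomputable def primitiveOneAddSqPow (m : ℕ) (t : ℝ) : ℝ :=
  ∑ j ∈ range (m + 1), (m.choose j : ℝ) * t ^ (2 * j + 1) / (2 * j + 1)

lemma hasDerivAt_primitiveOneAddSqPow (m : ℕ) (t : ℝ) :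
    HasDerivAt (primitiveOneAddSqPow m) ((1 + t ^ 2) ^ m) t := by
  have h := HasDerivAt.fun_sum (u := range (m + 1)) fun j _ =>
    ((hasDerivAt_pow (2 * j + 1) t).const_mul (m.choose j : ℝ)).div_const (2 * j + 1 : ℝ)
  refine h.congr_deriv ?_
  rw [add_comm (1 : ℝ), add_pow]
  refine sum_congr rfl fun j _ => ?_
  have : (2 * j + 1 : ℝ) ≠ 0 := by positivity
  rw [add_tsub_cancel_right, one_pow, mul_one, ← pow_mul]
  push_cast
  field_simp

lemma hasDerivAt_primitiveOneAddSqPow_cot (m : ℕ) {x : ℝ} (hx : sin x ≠ 0) :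
    HasDerivAt (fun y => primitiveOneAddSqPow m (cot y)) (-(1 / sin x ^ (2 * (m + 1)))) x := by
  refine ((hasDerivAt_primitiveOneAddSqPow m (cot x)).comp x (hasDerivAt_cot hx)).congr_deriv ?_
  rw [one_add_cot_sq hx, pow_mul, one_div_pow, mul_neg, one_div_mul_one_div, ← pow_succ]

lemma integral_one_div_sin_pow_eq_primitiveOneAddSqPow (m : ℕ) {θ : ℝ}
    (hθ : θ ∈ Set.Ioo 0 π) :
    ∫ x in θ..(π / 2), 1 / sin x ^ (2 * (m + 1)) = primitiveOneAddSqPow m (cot θ) := by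
  have hsub : Set.uIcc θ (π / 2) ⊆ Set.Ioo 0 π :=
    Set.ordConnected_Ioo.uIcc_subset hθ ⟨by positivity, by linarith [pi_pos]⟩
  have hsin : ∀ x ∈ Set.uIcc θ (π / 2), sin x ≠ 0 := fun x hx =>
    (sin_pos_of_pos_of_lt_pi (hsub hx).1 (hsub hx).2).ne'
  have hint :
      IntervalIntegrable (fun x => 1 / sin x ^ (2 * (m + 1))) MeasureTheory.volume θ (π / 2) :=
    (continuousOn_const.div (continuous_sin.continuousOn.pow _)
      fun x hx => pow_ne_zero _ (hsin x hx)).intervalIntegrable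
  have hneg := intervalIntegral.integral_eq_sub_of_hasDerivAt
    (fun x hx => hasDerivAt_primitiveOneAddSqPow_cot m (hsin x hx)) hint.neg
  rw [intervalIntegral.integral_neg, cot_pi_div_two] at hneg
  simpa [primitiveOneAddSqPow] using hneg

lemma primitiveOneAddSqPow_eq_factorial_mul_sum (m : ℕ) (t : ℝ) :
    primitiveOneAddSqPow m t = (m ! : ℝ) * ∑ k ∈ Icc 1 (m + 1),
      t ^ (2 * k - 1) / ((2 * k - 1 : ℝ) * ((k - 1)! : ℝ) * ((m + 1 - k)! : ℝ)) := by
  rw [← Ico_add_one_right_eq_Icc, sum_Ico_eq_sum_range, add_tsub_cancel_right, mul_sum]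
  refine sum_congr rfl fun j hj => ?_
  have hjm : j ≤ m := Nat.lt_succ_iff.mp (mem_range.mp hj)
  rw [show 2 * (1 + j) - 1 = 2 * j + 1 by omega, show 1 + j - 1 = j by omega,
    show m + 1 - (1 + j) = m - j by omega, Nat.cast_choose ℝ hjm,
    show 2 * ((1 + j : ℕ) : ℝ) - 1 = 2 * j + 1 by push_cast; ring]
  have : (2 * j + 1 : ℝ) ≠ 0 := by positivity
  field_simp

theorem integral_one_div_sin_even_pow_cot (n : ℕ) (hn : 1 ≤ n) (θ : ℝ) (hθ : θ ∈ Set.Ioo 0 π) :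
    ∫ x in θ..(π / 2), 1 / Real.sin x ^ (2 * n) =
      ((n - 1)! : ℝ) * ∑ k ∈ Finset.Icc 1 n,
        Real.cot θ ^ (2 * k - 1) / ((2 * k - 1 : ℝ) * ((k - 1)! : ℝ) * ((n - k)! : ℝ)) := by
  obtain ⟨m, rfl⟩ := Nat.exists_eq_add_of_le' hn
  rw [integral_one_div_sin_pow_eq_primitiveOneAddSqPow m hθ,
    primitiveOneAddSqPow_eq_factorial_mul_sum, add_tsub_cancel_right]
end

section
/- For a, b, c complex with c not a nonpositive integer and |z| < 1, the Euler transformation holds: ₂F₁(a, b; c; z) = (1-z)^{c-a-b} · ₂F₁(c-a, c-b; c; z). -/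
open Complex

/-- The Gauss hypergeometric series `₂F₁(a, b; c; z)` over the complex numbers. -/
noncomputable def hyp2F1 (a b c z : ℂ) : ℂ :=
  ∑' n : ℕ, ((ascPochhammer ℂ n).eval a * (ascPochhammer ℂ n).eval b /
    ((ascPochhammer ℂ n).eval c * (n.factorial : ℂ))) * z ^ n

/-!
Comparing coefficients, the transformation is the formal identity
`F(a, b; c) = (1 - X)^(c - a - b) * F(c - a, c - b; c)` in `𝕂⟦X⟧`, where `(1 - X)^(-s)` is the
formal series `F(s, 1; 1)`. When `c ∉ -ℕ`, the series `F(a, b; c)` is the only solution with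
constant term `1` of the hypergeometric equation `X(1 - X)f'' + (c - (a + b + 1)X)f' - ab f = 0`,
because the equation is the recurrence `(n + 1)(n + c) fₙ₊₁ = (n + a)(n + b) fₙ`. If
`(1 - X)u' = (a + b - c)u`, multiplication by `u` carries solutions of the `(c - a, c - b; c)`
equation to solutions of the `(a, b; c)` equation, so the right-hand side solves the
`(a, b; c)` equation. For `‖z‖ < 1` all three series converge absolutely, the binomial series
sums to `(1 - z)^(-s)`, and the Cauchy product turns the formal identity into the analytic one.
-/

open PowerSeries

theorem coeff_X_mul_derivative {R : Type*} [CommSemiring R] (f : R⟦X⟧) (n : ℕ) :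
    coeff n (X * d⁄dX R f) = n * coeff n f := by
  rcases n with _ | n
  · simp
  · rw [coeff_succ_X_mul, coeff_derivative, mul_comm]
    push_cast
    rfl

section HypergeometricEquation

variable {R : Type*} [CommRing R]

noncomputable def hypergeometricOperator (a b c : R) (f : R⟦X⟧) : R⟦X⟧ :=
  X * (1 - X) * d⁄dX R (d⁄dX R f) + (C c - (C a + C b + 1) * X) * d⁄dX R f - C a * C b * f

theorem coeff_hypergeometricOperator (a b c : R) (f : R⟦X⟧) (n : ℕ) :
    coeff n (hypergeometricOperator a b c f)
      = ((n : R) + 1) * (c + n) * coeff (n + 1) f - (a + n) * (b + n) * coeff n f := by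
  have expand : hypergeometricOperator a b c f
      = X * d⁄dX R (d⁄dX R f) - X * (X * d⁄dX R (d⁄dX R f)) + C c * d⁄dX R f
        - (C a + C b + 1) * (X * d⁄dX R f) - C a * (C b * f) := by
    unfold hypergeometricOperator
    ring
  rw [expand]
  rcases n with _ | n
  · simp only [map_sub, map_add, add_mul, one_mul, coeff_zero_X_mul, coeff_C_mul,
      coeff_derivative]
    push_cast
    ring
  · simp only [map_sub, map_add, add_mul, one_mul, coeff_succ_X_mul, coeff_X_mul_derivative,
      coeff_C_mul, coeff_derivative]
    push_cast
    ring

end HypergeometricEquation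

section HypergeometricPowerSeries

variable {𝕂 : Type*} [Field 𝕂]

theorem ordinaryHypergeometricCoefficient_zero (a b c : 𝕂) :
    ordinaryHypergeometricCoefficient a b c 0 = 1 := by
  simp [ordinaryHypergeometricCoefficient]

theorem ordinaryHypergeometricCoefficient_succ [CharZero 𝕂] (a b : 𝕂) {c : 𝕂} (n : ℕ)
    (hc : c + n ≠ 0) :
    ((n : 𝕂) + 1) * (c + n) * ordinaryHypergeometricCoefficient a b c (n + 1)
      = (a + n) * (b + n) * ordinaryHypergeometricCoefficient a b c n := by
  have hn : ((n : 𝕂) + 1) ≠ 0 := Nat.cast_add_one_ne_zero n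
  simp only [ordinaryHypergeometricCoefficient, ascPochhammer_succ_eval, Nat.factorial_succ,
    Nat.cast_mul, Nat.cast_succ, mul_inv]
  field_simp

noncomputable def hypergeometricPowerSeries (a b c : 𝕂) : 𝕂⟦X⟧ :=
  mk (ordinaryHypergeometricCoefficient a b c)

theorem constantCoeff_hypergeometricPowerSeries (a b c : 𝕂) :
    constantCoeff (hypergeometricPowerSeries a b c) = 1 := by
  rw [← coeff_zero_eq_constantCoeff_apply, hypergeometricPowerSeries, coeff_mk,
    ordinaryHypergeometricCoefficient_zero]

theorem hypergeometricOperator_hypergeometricPowerSeries [CharZero 𝕂] (a b : 𝕂) {c : 𝕂}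
    (hc : ∀ k : ℕ, c ≠ -(k : 𝕂)) :
    hypergeometricOperator a b c (hypergeometricPowerSeries a b c) = 0 := by
  ext n
  rw [coeff_hypergeometricOperator, hypergeometricPowerSeries, coeff_mk, coeff_mk, map_zero,
    ordinaryHypergeometricCoefficient_succ a b n fun h => hc n (eq_neg_of_add_eq_zero_left h),
    sub_self]

theorem eq_hypergeometricPowerSeries_of_hypergeometricOperator_eq_zero [CharZero 𝕂] {a b c : 𝕂}
    (hc : ∀ k : ℕ, c ≠ -(k : 𝕂)) {f : 𝕂⟦X⟧} (hf : hypergeometricOperator a b c f = 0)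
    (h0 : constantCoeff f = 1) : f = hypergeometricPowerSeries a b c := by
  ext n
  rw [hypergeometricPowerSeries, coeff_mk]
  induction n with
  | zero => rw [coeff_zero_eq_constantCoeff_apply, h0, ordinaryHypergeometricCoefficient_zero]
  | succ n ih =>
    have hcn : c + n ≠ 0 := fun h => hc n (eq_neg_of_add_eq_zero_left h)
    have hrec := coeff_hypergeometricOperator a b c f n
    rw [hf, map_zero, ih, ← ordinaryHypergeometricCoefficient_succ a b n hcn, eq_comm,
      sub_eq_zero] at hrec
    exact mul_left_cancel₀ (mul_ne_zero (Nat.cast_add_one_ne_zero n) hcn) hrec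

theorem hypergeometricOperator_mul_eq_zero {a b c : 𝕂} {u g : 𝕂⟦X⟧}
    (hu : (1 - X) * d⁄dX 𝕂 u = C (a + b - c) * u)
    (hg : hypergeometricOperator (c - a) (c - b) c g = 0) :
    hypergeometricOperator a b c (u * g) = 0 := by
  have hu' : (1 - X) * d⁄dX 𝕂 (d⁄dX 𝕂 u) = (C (a + b - c) + 1) * d⁄dX 𝕂 u := by
    have h := congrArg (d⁄dX 𝕂) hu
    simp only [Derivation.leibniz, smul_eq_mul, map_sub, map_add, derivative_X, derivative_C,
      Derivation.map_one_eq_zero] at h ⊢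
    linear_combination h
  have hD : d⁄dX 𝕂 (u * g) = u * d⁄dX 𝕂 g + g * d⁄dX 𝕂 u := by
    rw [Derivation.leibniz, smul_eq_mul, smul_eq_mul]
  have hDD : d⁄dX 𝕂 (d⁄dX 𝕂 (u * g))
      = u * d⁄dX 𝕂 (d⁄dX 𝕂 g) + 2 * d⁄dX 𝕂 u * d⁄dX 𝕂 g + g * d⁄dX 𝕂 (d⁄dX 𝕂 u) := by
    simp only [hD, map_add, Derivation.leibniz, smul_eq_mul]
    ring
  have key : (1 - X) * hypergeometricOperator a b c (u * g) = 0 := by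
    unfold hypergeometricOperator at hg ⊢
    simp only [map_sub, map_add] at hu hu' hg
    rw [hDD, hD]
    linear_combination (1 - X) * u * hg + ((1 - X) * (C c * g + 2 * X * d⁄dX 𝕂 g)) * hu
      + (X * (1 - X) * g) * hu'
  refine (mul_eq_zero.1 key).resolve_left fun h => ?_
  simpa using congrArg constantCoeff h

theorem one_sub_X_mul_derivative_hypergeometricPowerSeries_one_one [CharZero 𝕂] (s : 𝕂) :
    (1 - X) * d⁄dX 𝕂 (hypergeometricPowerSeries s 1 1)
      = C s * hypergeometricPowerSeries s 1 1 := by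
  ext n
  have hn : ((n : 𝕂) + 1) ≠ 0 := Nat.cast_add_one_ne_zero n
  have hrec := ordinaryHypergeometricCoefficient_succ s 1 n (by rwa [add_comm])
  have hcancel : ((n : 𝕂) + 1) * (((n : 𝕂) + 1) * ordinaryHypergeometricCoefficient s 1 1 (n + 1)
      - (s + n) * ordinaryHypergeometricCoefficient s 1 1 n) = 0 := by
    linear_combination hrec
  rw [sub_mul, one_mul, map_sub, coeff_X_mul_derivative, coeff_derivative, coeff_C_mul]
  simp only [hypergeometricPowerSeries, coeff_mk]
  linear_combination (mul_eq_zero.1 hcancel).resolve_left hn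

theorem hypergeometricPowerSeries_eq_mul [CharZero 𝕂] {c : 𝕂} (hc : ∀ k : ℕ, c ≠ -(k : 𝕂))
    (a b : 𝕂) :
    hypergeometricPowerSeries a b c
      = hypergeometricPowerSeries (a + b - c) 1 1 * hypergeometricPowerSeries (c - a) (c - b) c :=
  (eq_hypergeometricPowerSeries_of_hypergeometricOperator_eq_zero hc
    (hypergeometricOperator_mul_eq_zero
      (one_sub_X_mul_derivative_hypergeometricPowerSeries_one_one _)
      (hypergeometricOperator_hypergeometricPowerSeries _ _ hc))
    (by rw [map_mul, constantCoeff_hypergeometricPowerSeries,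
      constantCoeff_hypergeometricPowerSeries, one_mul])).symm

end HypergeometricPowerSeries

theorem one_le_radius_ordinaryHypergeometricSeries {𝕂 : Type*} [RCLike 𝕂] (𝔸 : Type*)
    [NormedDivisionRing 𝔸] [NormedAlgebra 𝕂 𝔸] (a b : 𝕂) {c : 𝕂}
    (hc : ∀ k : ℕ, c ≠ -(k : 𝕂)) :
    1 ≤ (ordinaryHypergeometricSeries 𝔸 a b c).radius := by
  by_cases ha : ∃ k : ℕ, a = -(k : 𝕂)
  · obtain ⟨k, rfl⟩ := ha
    simp [ordinaryHypergeometric_radius_top_of_neg_nat₁]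
  by_cases hb : ∃ k : ℕ, b = -(k : 𝕂)
  · obtain ⟨k, rfl⟩ := hb
    simp [ordinaryHypergeometric_radius_top_of_neg_nat₂]
  push Not at ha hb
  refine (ordinaryHypergeometricSeries_radius_eq_one 𝔸 a b c fun k => ?_).ge
  refine ⟨fun h => ha k ?_, fun h => hb k ?_, fun h => hc k ?_⟩ <;> linear_combination h

theorem summable_norm_coeff_hypergeometricPowerSeries_mul_pow {𝕂 : Type*} [RCLike 𝕂]
    (a b : 𝕂) {c : 𝕂} (hc : ∀ k : ℕ, c ≠ -(k : 𝕂)) {z : 𝕂} (hz : ‖z‖ < 1) :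
    Summable fun n => ‖coeff n (hypergeometricPowerSeries a b c) * z ^ n‖ := by
  have hz' : z ∈ Metric.eball (0 : 𝕂) (ordinaryHypergeometricSeries 𝕂 a b c).radius := by
    refine mem_eball_zero_iff.2
      (lt_of_lt_of_le ?_ (one_le_radius_ordinaryHypergeometricSeries 𝕂 a b hc))
    rwa [← ofReal_norm, ENNReal.ofReal_lt_one]
  refine ((ordinaryHypergeometricSeries 𝕂 a b c).summable_norm_apply hz').congr fun n => ?_
  rw [ordinaryHypergeometricSeries, FormalMultilinearSeries.ofScalars_apply_eq, smul_eq_mul,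
    hypergeometricPowerSeries, coeff_mk]

theorem hasSum_coeff_hypergeometricPowerSeries_one_one_mul_pow (s : ℂ) {z : ℂ} (hz : ‖z‖ < 1) :
    HasSum (fun n => coeff n (hypergeometricPowerSeries s 1 1) * z ^ n) ((1 - z) ^ (-s)) := by
  have h := (one_add_cpow_hasFPowerSeriesOnBall_zero (a := -s)).hasSum (y := -z)
    (by rwa [mem_eball_zero_iff, ← ofReal_norm, ENNReal.ofReal_lt_one, norm_neg])
  rw [binomialSeries_eq_ordinaryHypergeometricSeries (b := (1 : ℂ)) (by norm_cast; simp),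
    ordinaryHypergeometricSeries, FormalMultilinearSeries.ofScalars_comp_neg_id, zero_add,
    ← sub_eq_add_neg] at h
  refine h.congr_fun fun n => ?_
  rw [hypergeometricPowerSeries, coeff_mk, FormalMultilinearSeries.ofScalars_apply_eq,
    smul_eq_mul, neg_neg, neg_pow z, mul_mul_mul_comm, ← mul_pow, neg_one_mul, neg_neg, one_pow,
    one_mul]

theorem tsum_coeff_mul_mul_pow {R : Type*} [NormedCommRing R] [CompleteSpace R] {f g : R⟦X⟧}
    {z : R} (hf : Summable fun n => ‖coeff n f * z ^ n‖)
    (hg : Summable fun n => ‖coeff n g * z ^ n‖) :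
    ∑' n, coeff n (f * g) * z ^ n = (∑' n, coeff n f * z ^ n) * ∑' n, coeff n g * z ^ n := by
  rw [tsum_mul_tsum_eq_tsum_sum_antidiagonal_of_summable_norm hf hg]
  refine tsum_congr fun n => ?_
  rw [coeff_mul, Finset.sum_mul]
  refine Finset.sum_congr rfl fun kl hkl => ?_
  rw [← Finset.HasAntidiagonal.mem_antidiagonal.1 hkl, pow_add]
  ring

theorem hyp2F1_eq_tsum_coeff (a b c z : ℂ) :
    hyp2F1 a b c z = ∑' n, coeff n (hypergeometricPowerSeries a b c) * z ^ n := by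
  refine tsum_congr fun n => ?_
  rw [hypergeometricPowerSeries, coeff_mk, div_eq_mul_inv, mul_inv]
  ring

theorem euler_transformation (a b c z : ℂ) (hc : ∀ k : ℕ, c ≠ -(k : ℂ)) (hz : ‖z‖ < 1) :
    hyp2F1 a b c z = (1 - z) ^ (c - a - b) * hyp2F1 (c - a) (c - b) c z := by
  have hone : ∀ k : ℕ, (1 : ℂ) ≠ -(k : ℂ) := fun k h =>
    Nat.cast_add_one_ne_zero k (by linear_combination h)
  rw [hyp2F1_eq_tsum_coeff, hyp2F1_eq_tsum_coeff, hypergeometricPowerSeries_eq_mul hc,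
    tsum_coeff_mul_mul_pow (summable_norm_coeff_hypergeometricPowerSeries_mul_pow _ _ hone hz)
      (summable_norm_coeff_hypergeometricPowerSeries_mul_pow _ _ hc hz),
    show c - a - b = -(a + b - c) by ring,
    (hasSum_coeff_hypergeometricPowerSeries_one_one_mul_pow (a + b - c) hz).tsum_eq]
end
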